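/- arXiv:1706.02142 — 6 statements merged into one kernel-verified Lean document; each statement's English description precedes it below -/
import Mathlib

section
/- Let r1, r2 > 0 and m ≥ 0. If |log r1| ≤ m or |log r2| ≤ m, then min(1,r1)·min(1,r2) ≥ e^{−m}·min(1, r1·r2). -/
lemma key_aux_3 (a b m : ℝ) (ha : 0 < a) (hb : 0 < b)
    (hlo : Real.exp (-m) ≤ a) (hhi : a ≤ Real.exp m) :
    min 1 a * min 1 b ≥ Real.exp (-m) * min 1 (a * b) := by
  have hp : 0 < Real.exp (-m) := Real.exp_pos _
  have hprod : Real.exp (-m) * Real.exp m = 1 := by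
    rw [← Real.exp_add]; simp
  rcases le_or_gt a 1 with ha1 | ha1
  · rcases le_or_gt b 1 with hb1 | hb1
    · rw [min_eq_right ha1, min_eq_right hb1,
        min_eq_right (by nlinarith : a * b ≤ 1)]
      have he1 : Real.exp (-m) ≤ 1 := hlo.trans ha1
      nlinarith [mul_pos ha hb]
    · rw [min_eq_right ha1, min_eq_left hb1.le]
      have : min 1 (a * b) ≤ 1 := min_le_left _ _
      nlinarith
  · rcases le_or_gt b 1 with hb1 | hb1
    · rw [min_eq_left ha1.le, min_eq_right hb1]
      have h3 : min 1 (a * b) ≤ a * b := min_le_right _ _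
      have h4 : Real.exp (-m) * min 1 (a * b) ≤ Real.exp (-m) * (a * b) :=
        mul_le_mul_of_nonneg_left h3 hp.le
      have h5 : Real.exp (-m) * (a * b) ≤ Real.exp (-m) * (Real.exp m * b) := by
        have := mul_le_mul_of_nonneg_right hhi hb.le
        nlinarith
      nlinarith
    · rw [min_eq_left ha1.le, min_eq_left hb1.le]
      have : min 1 (a * b) ≤ 1 := min_le_left _ _
      nlinarith

theorem stmt_3 (r1 r2 m : ℝ) (h1 : 0 < r1) (h2 : 0 < r2) (hm : 0 ≤ m)
    (h : |Real.log r1| ≤ m ∨ |Real.log r2| ≤ m) :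
    min 1 r1 * min 1 r2 ≥ Real.exp (-m) * min 1 (r1 * r2) := by
  rcases h with h | h
  · rw [abs_le] at h
    have hlo : Real.exp (-m) ≤ r1 := by
      calc Real.exp (-m) ≤ Real.exp (Real.log r1) := Real.exp_le_exp.2 h.1
        _ = r1 := Real.exp_log h1
    have hhi : r1 ≤ Real.exp m := by
      calc r1 = Real.exp (Real.log r1) := (Real.exp_log h1).symm
        _ ≤ Real.exp m := Real.exp_le_exp.2 h.2
    exact key_aux_3 r1 r2 m h1 h2 hlo hhi
  · rw [abs_le] at h
    have hlo : Real.exp (-m) ≤ r2 := by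
      calc Real.exp (-m) ≤ Real.exp (Real.log r2) := Real.exp_le_exp.2 h.1
        _ = r2 := Real.exp_log h2
    have hhi : r2 ≤ Real.exp m := by
      calc r2 = Real.exp (Real.log r2) := (Real.exp_log h2).symm
        _ ≤ Real.exp m := Real.exp_le_exp.2 h.2
    have := key_aux_3 r2 r1 m h2 h1 hlo hhi
    rw [mul_comm r2 r1] at this
    linarith [this, mul_comm (min 1 r2) (min 1 r1)]
end

section
/- Let γ ∈ [1, 2) and x ≥ y ≥ 0. Then x^γ − y^γ ≥ (γ/2)(x − y)(x^{γ−1} + y^{γ−1}). -/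
/-!
For `p = γ - 1 ∈ [0, 1]` the function `t ↦ t ^ p` is concave on `[0, ∞)`, so on `[y, x]` its
integral `(x ^ γ - y ^ γ) / γ` dominates the trapezoid `(x - y) (x ^ p + y ^ p) / 2`. The trapezoid
bound follows by integrating `f a + f b ≤ f t + f (a + b - t)` over `[a, b]`.
-/

open Set intervalIntegral MeasureTheory

namespace ConcaveOn

variable {s : Set ℝ} {f : ℝ → ℝ} {a b t : ℝ}

theorem add_le_apply_add_apply_reflect (hf : ConcaveOn ℝ s f) (ha : a ∈ s) (hb : b ∈ s)
    (ht : t ∈ Icc a b) : f a + f b ≤ f t + f (a + b - t) := by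
  rw [← segment_eq_Icc (ht.1.trans ht.2)] at ht
  obtain ⟨μ, ν, hμ, hν, hμν, rfl⟩ := ht
  have hleft := hf.2 ha hb hμ hν hμν
  have hright := hf.2 ha hb hν hμ (by linarith)
  simp only [smul_eq_mul] at hleft hright ⊢
  have hreflect : a + b - (μ * a + ν * b) = ν * a + μ * b := by
    linear_combination -(a + b) * hμν
  rw [hreflect]
  linear_combination hleft + hright - (f a + f b) * hμν

theorem trapezoid_le_integral (hf : ConcaveOn ℝ (Icc a b) f) (hab : a ≤ b)
    (hint : IntervalIntegrable f volume a b) :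
    (b - a) * (f a + f b) / 2 ≤ ∫ t in a..b, f t := by
  have hint_reflect : IntervalIntegrable (fun t ↦ f (a + b - t)) volume a b := by
    simpa using (hint.comp_sub_left (a + b)).symm
  have hreflect : ∫ t in a..b, f (a + b - t) = ∫ t in a..b, f t := by
    simp [integral_comp_sub_left f (a + b)]
  have hmono : ∫ _ in a..b, (f a + f b) ≤ ∫ t in a..b, (f t + f (a + b - t)) :=
    integral_mono_on hab intervalIntegrable_const (hint.add hint_reflect) fun t ht ↦
      hf.add_le_apply_add_apply_reflect (left_mem_Icc.2 hab) (right_mem_Icc.2 hab) ht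
  rw [integral_add hint hint_reflect, hreflect, intervalIntegral.integral_const,
    smul_eq_mul] at hmono
  linarith

end ConcaveOn

theorem stmt_5 (γ x y : ℝ) (hγ : 1 ≤ γ) (hγ2 : γ < 2) (hy : 0 ≤ y) (hxy : y ≤ x) :
    x ^ γ - y ^ γ ≥ (γ / 2) * (x - y) * (x ^ (γ - 1) + y ^ (γ - 1)) := by
  have hconc : ConcaveOn ℝ (Icc y x) (fun t : ℝ ↦ t ^ (γ - 1)) :=
    (Real.concaveOn_rpow (by linarith) (by linarith)).subset (Icc_subset_Ici_iff hxy |>.2 hy)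
      (convex_Icc y x)
  have htrap := hconc.trapezoid_le_integral hxy (intervalIntegrable_rpow' (by linarith))
  have hintegral : ∫ t in y..x, t ^ (γ - 1) = (x ^ γ - y ^ γ) / γ := by
    rw [integral_rpow (Or.inl (by linarith))]
    simp
  rw [hintegral, le_div_iff₀ (by linarith)] at htrap
  linarith
end

section
/- Let γ ∈ [1, 2), λ > 0, and x ≥ y ≥ 0 with x ≥ 1. Then x^γ − y^γ − (γ/2)(x − y)(x^{γ−1} + y^{γ−1}) + (λ²γ²/8)(x^{2γ−2} − y^{2γ−2}) ≥ 0. -/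
/-! The derivative `t ↦ γ t^(γ-1)` of `t ↦ t^γ` is concave on `[0, ∞)` for `1 ≤ γ ≤ 2`, and the
integral of a concave function dominates its trapezoid approximation; hence
`x^γ - y^γ = ∫_y^x γ t^(γ-1) dt ≥ (γ/2)(x - y)(x^(γ-1) + y^(γ-1))`. The remaining term is
nonnegative because `t ↦ t^(2γ-2)` is monotone. -/

open Real Set intervalIntegral
open MeasureTheory (volume)

theorem ConcaveOn.trapezoid_le_intervalIntegral {f : ℝ → ℝ} {a b : ℝ} (hab : a ≤ b)
    (hf : ConcaveOn ℝ (Icc a b) f) (hint : IntervalIntegrable f volume a b) :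
    (b - a) * (f a + f b) / 2 ≤ ∫ t in a..b, f t := by
  rcases hab.eq_or_lt with rfl | hlt
  · simp
  have hba : 0 < b - a := sub_pos.2 hlt
  set chord : ℝ → ℝ := fun t => f a + (f b - f a) / (b - a) * (t - a)
  have hchord_le : ∀ t ∈ Icc a b, chord t ≤ f t := by
    rintro t ⟨hat, htb⟩
    set θ := (t - a) / (b - a) with hθ_def
    have hθ : 0 ≤ θ := div_nonneg (by linarith) hba.le
    have hθ' : 0 ≤ 1 - θ := by
      rw [sub_nonneg, hθ_def, div_le_one hba]; linarith
    have ht : (1 - θ) * a + θ * b = t := by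
      rw [hθ_def]; field_simp; ring
    have := hf.2 (left_mem_Icc.2 hab) (right_mem_Icc.2 hab) hθ' hθ (by ring)
    simp only [smul_eq_mul, ht] at this
    have hchord : chord t = (1 - θ) * f a + θ * f b := by
      simp only [chord, hθ_def]; field_simp; ring
    rwa [hchord]
  have hchord_int : ∫ t in a..b, chord t = (b - a) * (f a + f b) / 2 := by
    have hslope : Continuous fun t => (f b - f a) / (b - a) * (t - a) := by fun_prop
    simp only [chord]
    rw [integral_add intervalIntegrable_const (hslope.intervalIntegrable _ _), integral_const,
      integral_const_mul, integral_comp_sub_right (fun t => t), integral_id]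
    field_simp
    ring
  rw [← hchord_int]
  exact integral_mono_on hab ((by fun_prop : Continuous chord).intervalIntegrable _ _)
    hint hchord_le

theorem Real.trapezoid_rpow_le_rpow_sub_rpow {γ x y : ℝ} (hγ : 1 ≤ γ) (hγ2 : γ ≤ 2)
    (hy : 0 ≤ y) (hxy : y ≤ x) :
    γ / 2 * (x - y) * (x ^ (γ - 1) + y ^ (γ - 1)) ≤ x ^ γ - y ^ γ := by
  have hconc : ConcaveOn ℝ (Icc y x) fun t => γ * t ^ (γ - 1) :=
    ((concaveOn_rpow (by linarith) (by linarith)).subset (fun t ht => hy.trans ht.1)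
      (convex_Icc y x)).smul (by linarith)
  have hint : IntervalIntegrable (fun t => γ * t ^ (γ - 1)) volume y x :=
    (intervalIntegrable_rpow' (by linarith)).const_mul γ
  have hFTC : ∫ t in y..x, γ * t ^ (γ - 1) = x ^ γ - y ^ γ := by
    rw [integral_const_mul, integral_rpow (Or.inl (by linarith)), sub_add_cancel]
    field_simp
  have := hconc.trapezoid_le_intervalIntegral hxy hint
  rw [hFTC] at this
  linarith

theorem stmt_6_general (γ lam x y : ℝ) (hγ : 1 ≤ γ) (hγ2 : γ < 2)
    (hy : 0 ≤ y) (hxy : y ≤ x) :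
    x ^ γ - y ^ γ - (γ / 2) * (x - y) * (x ^ (γ - 1) + y ^ (γ - 1))
      + (lam ^ 2 * γ ^ 2 / 8) * (x ^ (2 * γ - 2) - y ^ (2 * γ - 2)) ≥ 0 := by
  have htrapezoid := trapezoid_rpow_le_rpow_sub_rpow hγ hγ2.le hy hxy
  have hmono : y ^ (2 * γ - 2) ≤ x ^ (2 * γ - 2) := rpow_le_rpow hy hxy (by linarith)
  have hcorr : 0 ≤ lam ^ 2 * γ ^ 2 / 8 * (x ^ (2 * γ - 2) - y ^ (2 * γ - 2)) :=
    mul_nonneg (by positivity) (sub_nonneg.2 hmono)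
  linarith

theorem stmt_6 (γ lam x y : ℝ) (hγ : 1 ≤ γ) (hγ2 : γ < 2) (hlam : 0 < lam)
    (hy : 0 ≤ y) (hxy : y ≤ x) (hx : 1 ≤ x) :
    x ^ γ - y ^ γ - (γ / 2) * (x - y) * (x ^ (γ - 1) + y ^ (γ - 1))
      + (lam ^ 2 * γ ^ 2 / 8) * (x ^ (2 * γ - 2) - y ^ (2 * γ - 2)) ≥ 0 :=
  stmt_6_general γ lam x y hγ hγ2 hy hxy
end

section
/- Let π and π̂ be positive probability densities on ℝᵈ and suppose there exist 0 < γ_lo ≤ γ_hi < ∞ with γ_lo ≤ π̂(x)/π(x) ≤ γ_hi for all x. Then for all x, y: |log(π(y)/π̂(y)) − log(π(x)/π̂(x))| ≤ log(γ_hi/γ_lo), and consequently the delayed-acceptance probability satisfies α_DA(x,y) ≥ (γ_lo/γ_hi)·α_MH(x,y), where α_DA(x,y) = min(1, π̂(y)q(y,x)/(π̂(x)q(x,y)))·min(1, (π(y)/π̂(y))/(π(x)/π̂(x))) and α_MH(x,y) = min(1, π(y)q(y,x)/(π(x)q(x,y))), for any positive proposal density q. -/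
/-!
Write `b = (π y / π̂ y) / (π x / π̂ x)`. Since `b` and `b⁻¹` are both quotients of two values of
`π̂ / π ∈ [γlo, γhi]`, both are at most `K = γhi / γlo`; this gives the log bound at once. The
Metropolis–Hastings ratio factors as `a * b` with `a` the first-stage ratio, and
`min 1 a * min 1 b ≥ K⁻¹ * min 1 (a * b)` holds for every `a ≥ 0` and every `b` with `b, b⁻¹ ≤ K`.
-/

open Set

lemma div_le_div_of_mem_Icc {lo hi u v : ℝ} (hlo : 0 < lo) (hu : u ∈ Icc lo hi)
    (hv : v ∈ Icc lo hi) : u / v ≤ hi / lo :=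
  div_le_div₀ (hlo.le.trans (hu.1.trans hu.2)) hu.2 hlo hv.1

lemma abs_log_le_log_of_le_of_inv_le {t K : ℝ} (ht : 0 < t) (htK : t ≤ K) (htK' : t⁻¹ ≤ K) :
    |Real.log t| ≤ Real.log K := by
  refine abs_le.mpr ⟨?_, Real.log_le_log ht htK⟩
  rw [neg_le, ← Real.log_inv]
  exact Real.log_le_log (inv_pos.mpr ht) htK'

lemma inv_mul_min_one_mul_le_min_one_mul_min_one {a b K : ℝ} (ha : 0 ≤ a) (hb : 0 < b)
    (hbK : b ≤ K) (hbK' : b⁻¹ ≤ K) : K⁻¹ * min 1 (a * b) ≤ min 1 a * min 1 b := by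
  have hK0 : 0 ≤ K⁻¹ := inv_nonneg.mpr (hb.le.trans hbK)
  have hKb : K⁻¹ ≤ b := by simpa using inv_anti₀ (inv_pos.mpr hb) hbK'
  have hKb' : K⁻¹ * b ≤ 1 := by
    rw [inv_mul_le_iff₀ (hb.trans_le hbK), mul_one]; exact hbK
  set m := min 1 (a * b)
  have hm0 : 0 ≤ m := le_min zero_le_one (mul_nonneg ha hb.le)
  have hKm : K⁻¹ * m ≤ K⁻¹ := mul_le_of_le_one_right hK0 (min_le_left _ _)
  have hmab : m ≤ a * b := min_le_right _ _
  rcases le_total 1 a with ha1 | ha1 <;> rcases le_total 1 b with hb1 | hb1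
  · rw [min_eq_left ha1, min_eq_left hb1, mul_one]
    exact hKm.trans ((le_mul_of_one_le_right hK0 hb1).trans hKb')
  · rw [min_eq_left ha1, min_eq_right hb1, one_mul]
    exact hKm.trans hKb
  · rw [min_eq_right ha1, min_eq_left hb1, mul_one]
    calc K⁻¹ * m ≤ K⁻¹ * (a * b) := mul_le_mul_of_nonneg_left hmab hK0
      _ = a * (K⁻¹ * b) := by ring
      _ ≤ a := mul_le_of_le_one_right ha hKb'
  · rw [min_eq_right ha1, min_eq_right hb1]
    exact (mul_le_of_le_one_left hm0 (hKb.trans hb1)).trans hmab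

theorem stmt_12_general {d : ℕ} (π πhat : EuclideanSpace ℝ (Fin d) → ℝ)
    (hπ : ∀ x, 0 < π x) (hπhat : ∀ x, 0 < πhat x)
    (γlo γhi : ℝ) (hlo : 0 < γlo)
    (hbound : ∀ x, γlo ≤ πhat x / π x ∧ πhat x / π x ≤ γhi)
    (q : EuclideanSpace ℝ (Fin d) → EuclideanSpace ℝ (Fin d) → ℝ)
    (hq : ∀ x y, 0 < q x y) :
    ∀ x y,
      |Real.log (π y / πhat y) - Real.log (π x / πhat x)| ≤ Real.log (γhi / γlo) ∧
      min 1 (πhat y * q y x / (πhat x * q x y)) *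
        min 1 ((π y / πhat y) / (π x / πhat x))
        ≥ (γlo / γhi) * min 1 (π y * q y x / (π x * q x y)) := by
  intro x y
  have := hπ x; have := hπ y; have := hπhat x; have := hπhat y
  have := hq x y; have := hq y x
  have hb : (π y / πhat y) / (π x / πhat x) = (πhat x / π x) / (πhat y / π y) := by
    field_simp
  have hb_le : (π y / πhat y) / (π x / πhat x) ≤ γhi / γlo :=
    hb ▸ div_le_div_of_mem_Icc hlo (hbound x) (hbound y)
  have hb_inv_le : ((π y / πhat y) / (π x / πhat x))⁻¹ ≤ γhi / γlo := by
    rw [hb, inv_div]; exact div_le_div_of_mem_Icc hlo (hbound y) (hbound x)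
  have hfactor : πhat y * q y x / (πhat x * q x y) * ((π y / πhat y) / (π x / πhat x)) =
      π y * q y x / (π x * q x y) := by
    field_simp
  refine ⟨?_, ?_⟩
  · rw [← Real.log_div (by positivity) (by positivity)]
    exact abs_log_le_log_of_le_of_inv_le (by positivity) hb_le hb_inv_le
  · rw [← inv_div γhi γlo, ← hfactor]
    exact inv_mul_min_one_mul_le_min_one_mul_min_one (by positivity) (by positivity) hb_le
      hb_inv_le

theorem stmt_12 {d : ℕ} (π πhat : EuclideanSpace ℝ (Fin d) → ℝ)
    (hπ : ∀ x, 0 < π x) (hπhat : ∀ x, 0 < πhat x)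
    (γlo γhi : ℝ) (hlo : 0 < γlo) (hlohi : γlo ≤ γhi)
    (hbound : ∀ x, γlo ≤ πhat x / π x ∧ πhat x / π x ≤ γhi)
    (q : EuclideanSpace ℝ (Fin d) → EuclideanSpace ℝ (Fin d) → ℝ)
    (hq : ∀ x y, 0 < q x y) :
    ∀ x y,
      |Real.log (π y / πhat y) - Real.log (π x / πhat x)| ≤ Real.log (γhi / γlo) ∧
      min 1 (πhat y * q y x / (πhat x * q x y)) *
        min 1 ((π y / πhat y) / (π x / πhat x))
        ≥ (γlo / γhi) * min 1 (π y * q y x / (π x * q x y)) :=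
  stmt_12_general π πhat hπ hπhat γlo γhi hlo hbound q hq
end

section
/- Let λ > 0, ν(x) = (λ²/2)∇log π(x) for a differentiable positive density π on ℝᵈ with ess sup ‖∇log π‖ = ∞. Then for every ε > 0 and every r > 0 there exists a set A of positive π-measure such that for all x ∈ A, P(‖x + ν(x) + λZ − x‖ > r) > 1 − ε, where Z is standard d-dimensional Gaussian; hence the MALA proposal is not local. -/
/-!
The displacement of the proposal is `ν x + λ Z`, whose norm is at least `‖ν x‖ - λ ‖Z‖`.
By continuity of `P` from below, `P (‖Z‖ < R) > 1 - ε` for some `R`. Since `‖∇ log π‖` has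
infinite essential supremum, the set where `‖ν x‖ > r + λ R` has positive `π`-measure, and for
such `x` the displacement exceeds `r` on the event `‖Z‖ < R`.
-/

open MeasureTheory ProbabilityTheory Filter Set Topology

theorem measurable_gradient {F : Type*} [NormedAddCommGroup F] [InnerProductSpace ℝ F]
    [CompleteSpace F] [MeasurableSpace F] [BorelSpace F] (f : F → ℝ) :
    Measurable (gradient f) :=
  (InnerProductSpace.toDual ℝ F).symm.continuous.measurable.comp (measurable_fderiv ℝ f)

theorem measure_setOf_lt_pos_of_lt_essSup {α β : Type*} [MeasurableSpace α] {μ : Measure α}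
    [CompleteLinearOrder β] {f : α → β} {c : β} (hc : c < essSup f μ) :
    0 < μ {x | c < f x} := by
  refine pos_iff_ne_zero.2 fun hzero => hc.not_ge (essSup_le_of_ae_le c ?_)
  simpa only [EventuallyLE, ae_iff, not_le] using hzero

theorem tendsto_measure_setOf_lt_atTop {Ω α : Type*} [MeasurableSpace Ω] [Preorder α]
    [NoMaxOrder α] [IsCountablyGenerated (atTop : Filter α)] (μ : Measure Ω) (f : Ω → α) :
    Tendsto (fun R => μ {ω | f ω < R}) atTop (𝓝 (μ univ)) := by
  have hunion : ⋃ R, {ω | f ω < R} = univ :=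
    eq_univ_of_forall fun ω => mem_iUnion.2 (exists_gt (f ω))
  rw [← hunion]
  exact tendsto_measure_iUnion_atTop fun R R' hRR' ω hω => lt_of_lt_of_le hω hRR'

theorem exists_one_sub_lt_measureReal_setOf_lt {Ω : Type*} [MeasurableSpace Ω] (μ : Measure Ω)
    [IsProbabilityMeasure μ] (f : Ω → ℝ) {ε : ℝ} (hε : 0 < ε) :
    ∃ R, 1 - ε < μ.real {ω | f ω < R} := by
  have h := (ENNReal.tendsto_toReal ENNReal.one_ne_top).comp
    (measure_univ (μ := μ) ▸ tendsto_measure_setOf_lt_atTop μ f)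
  exact (h.eventually (lt_mem_nhds (by rw [ENNReal.toReal_one]; linarith))).exists

theorem lt_norm_add_of_add_norm_lt {E : Type*} [SeminormedAddCommGroup E] {v w : E} {r : ℝ}
    (h : r + ‖w‖ < ‖v‖) : r < ‖v + w‖ := by
  have := norm_sub_norm_le v (-w)
  rw [norm_neg, sub_neg_eq_add] at this
  linarith

theorem stmt_17_general {d : ℕ} {Ω : Type*} [MeasurableSpace Ω] (P : Measure Ω)
    [IsProbabilityMeasure P]
    (Z : Ω → EuclideanSpace ℝ (Fin d))
    (lam : ℝ) (hlam : 0 < lam)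
    (π : EuclideanSpace ℝ (Fin d) → ℝ)
    (πm : Measure (EuclideanSpace ℝ (Fin d)))
    -- ess sup of the gradient of log π is infinite
    (hess : essSup (fun x => ENNReal.ofReal ‖gradient (fun x => Real.log (π x)) x‖) πm = ⊤)
    (ν : EuclideanSpace ℝ (Fin d) → EuclideanSpace ℝ (Fin d))
    (hν : ∀ x, ν x = (lam ^ 2 / 2) • gradient (fun x => Real.log (π x)) x) :
    ∀ ε > (0:ℝ), ∀ r > (0:ℝ), ∃ A : Set (EuclideanSpace ℝ (Fin d)),
      MeasurableSet A ∧ 0 < πm A ∧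
      ∀ x ∈ A, 1 - ε < (P {ω | r < ‖(x + ν x + lam • Z ω) - x‖}).toReal := by
  intro ε hε r _
  set g := gradient fun x => Real.log (π x)
  obtain ⟨R, hR⟩ := exists_one_sub_lt_measureReal_setOf_lt P (fun ω => ‖Z ω‖) hε
  set C := 2 * (r + lam * R) / lam ^ 2
  refine ⟨{x | C < ‖g x‖}, measurableSet_lt measurable_const (measurable_gradient _).norm, ?_, ?_⟩
  · refine (measure_setOf_lt_pos_of_lt_essSup (c := ENNReal.ofReal C)
      (hess ▸ ENNReal.ofReal_lt_top)).trans_le (measure_mono fun x hx => ?_)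
    exact (ENNReal.ofReal_lt_ofReal_iff'.1 hx).1
  · intro x hx
    have hν_large : r + lam * R < ‖ν x‖ := by
      rw [hν, norm_smul, Real.norm_of_nonneg (by positivity)]
      have hx' : C < ‖g x‖ := hx
      rw [div_lt_iff₀ (by positivity)] at hx'
      linarith
    calc 1 - ε < P.real {ω | ‖Z ω‖ < R} := hR
      _ ≤ P.real {ω | r < ‖(x + ν x + lam • Z ω) - x‖} := by
        refine measureReal_mono fun ω (hω : ‖Z ω‖ < R) => ?_
        show r < ‖x + ν x + lam • Z ω - x‖
        rw [add_assoc, add_sub_cancel_left]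
        refine lt_norm_add_of_add_norm_lt ?_
        rw [norm_smul, Real.norm_of_nonneg hlam.le]
        nlinarith

theorem stmt_17 {d : ℕ} {Ω : Type*} [MeasurableSpace Ω] (P : Measure Ω)
    [IsProbabilityMeasure P]
    (Z : Ω → EuclideanSpace ℝ (Fin d)) (hZmeas : Measurable Z)
    -- Z has i.i.d. standard normal components
    (hZlaw : ∀ i : Fin d, Measure.map (fun ω => Z ω i) P = gaussianReal 0 1)
    (hZindep : iIndepFun (fun i ω => Z ω i) P)
    (lam : ℝ) (hlam : 0 < lam)
    (π : EuclideanSpace ℝ (Fin d) → ℝ) (hπpos : ∀ x, 0 < π x)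
    (hπdiff : Differentiable ℝ (fun x => Real.log (π x)))
    (πm : Measure (EuclideanSpace ℝ (Fin d))) [IsProbabilityMeasure πm]
    (hπm : πm = volume.withDensity (fun x => ENNReal.ofReal (π x)))
    -- ess sup of the gradient of log π is infinite
    (hess : essSup (fun x => ENNReal.ofReal ‖gradient (fun x => Real.log (π x)) x‖) πm = ⊤)
    (ν : EuclideanSpace ℝ (Fin d) → EuclideanSpace ℝ (Fin d))
    (hν : ∀ x, ν x = (lam ^ 2 / 2) • gradient (fun x => Real.log (π x)) x) :
    ∀ ε > (0:ℝ), ∀ r > (0:ℝ), ∃ A : Set (EuclideanSpace ℝ (Fin d)),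
      MeasurableSet A ∧ 0 < πm A ∧
      ∀ x ∈ A, 1 - ε < (P {ω | r < ‖(x + ν x + lam • Z ω) - x‖}).toReal :=
  stmt_17_general P Z lam hlam π πm hess ν hν
end

section
/- Let P_MH and P_DA be the Metropolis-Hastings and delayed-acceptance kernels built from the same proposal density q and target π, with acceptance probabilities α_MH(x,y) = min(1, π(y)q(y,x)/(π(x)q(x,y))) and α_DA(x,y) = min(1, π̂(y)q(y,x)/(π̂(x)q(x,y)))·min(1, (π(y)π̂(x))/(π(x)π̂(y))). Then for every f ∈ L²(π), the Dirichlet forms satisfy E_{P_DA}(f) ≤ E_{P_MH}(f), where E_P(f) = (1/2)∫∫ π(x)q(x,y)α(x,y)(f(x) − f(y))² dy dx. -/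
open MeasureTheory ENNReal

/-- The Dirichlet form `E_P(f) = (1/2)∬ π(x) q(x,y) α(x,y) (f(x)-f(y))² dy dx` of a
propose-accept-reject kernel with target density `π`, proposal density `q` and
acceptance probability `α`. -/
noncomputable def dirichletForm {d : ℕ}
    (π : EuclideanSpace ℝ (Fin d) → ℝ)
    (q α : EuclideanSpace ℝ (Fin d) → EuclideanSpace ℝ (Fin d) → ℝ)
    (f : EuclideanSpace ℝ (Fin d) → ℝ) : ℝ≥0∞ :=
  (1/2) * ∫⁻ x, ∫⁻ y, ENNReal.ofReal (π x * q x y * α x y * (f x - f y) ^ 2)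

/-! The delayed-acceptance probability is the product of two Metropolis–Hastings factors whose
ratios multiply to the Metropolis–Hastings ratio, and `min 1 a * min 1 b ≤ min 1 (a * b)`.
So `α_DA ≤ α_MH` pointwise, and the Dirichlet form is monotone in the acceptance probability. -/

theorem min_one_mul_min_one_le {R : Type*} [Semiring R] [LinearOrder R] [IsOrderedRing R]
    {a b : R} (ha : 0 ≤ a) (hb : 0 ≤ b) : min 1 a * min 1 b ≤ min 1 (a * b) := by
  have hb' : 0 ≤ min 1 b := le_min zero_le_one hb
  refine le_min ?_ ?_
  · simpa using mul_le_mul (min_le_left 1 a) (min_le_left 1 b) hb' zero_le_one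
  · exact mul_le_mul (min_le_right 1 a) (min_le_right 1 b) hb' ha

theorem surrogate_ratio_mul_correction_ratio {K : Type*} [Field K] {πx πy ρx ρy qxy qyx : K}
    (hρx : ρx ≠ 0) (hρy : ρy ≠ 0) :
    ρy * qyx / (ρx * qxy) * (πy * ρx / (πx * ρy)) = πy * qyx / (πx * qxy) := by
  rw [div_mul_div_comm]
  calc ρy * qyx * (πy * ρx) / (ρx * qxy * (πx * ρy))
      = (ρx * ρy) * (πy * qyx) / ((ρx * ρy) * (πx * qxy)) := by ring
    _ = πy * qyx / (πx * qxy) := mul_div_mul_left _ _ (mul_ne_zero hρx hρy)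

theorem dirichletForm_mono {d : ℕ} {π : EuclideanSpace ℝ (Fin d) → ℝ}
    {q α₁ α₂ : EuclideanSpace ℝ (Fin d) → EuclideanSpace ℝ (Fin d) → ℝ}
    (hπq : ∀ x y, 0 ≤ π x * q x y) (hα : ∀ x y, α₁ x y ≤ α₂ x y)
    (f : EuclideanSpace ℝ (Fin d) → ℝ) :
    dirichletForm π q α₁ f ≤ dirichletForm π q α₂ f := by
  refine mul_le_mul_right (lintegral_mono fun x => lintegral_mono fun y => ?_) _
  refine ENNReal.ofReal_le_ofReal (mul_le_mul_of_nonneg_right ?_ (sq_nonneg _))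
  exact mul_le_mul_of_nonneg_left (hα x y) (hπq x y)

theorem stmt_18_general {d : ℕ} (π πhat : EuclideanSpace ℝ (Fin d) → ℝ)
    (hπ : ∀ x, 0 < π x) (hπhat : ∀ x, 0 < πhat x)
    (q : EuclideanSpace ℝ (Fin d) → EuclideanSpace ℝ (Fin d) → ℝ) (hq : ∀ x y, 0 < q x y)
    (αMH αDA : EuclideanSpace ℝ (Fin d) → EuclideanSpace ℝ (Fin d) → ℝ)
    (hMH : ∀ x y, αMH x y = min 1 (π y * q y x / (π x * q x y)))
    (hDA : ∀ x y, αDA x y = min 1 (πhat y * q y x / (πhat x * q x y)) *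
      min 1 ((π y * πhat x) / (π x * πhat y)))
    (f : EuclideanSpace ℝ (Fin d) → ℝ) :
    dirichletForm π q αDA f ≤ dirichletForm π q αMH f := by
  refine dirichletForm_mono (fun x y => (mul_pos (hπ x) (hq x y)).le) (fun x y => ?_) f
  have := hπ x; have := hπ y; have := hπhat x; have := hπhat y; have := hq x y; have := hq y x
  rw [hMH, hDA]
  refine (min_one_mul_min_one_le ?_ ?_).trans_eq ?_
  · positivity
  · positivity
  · rw [surrogate_ratio_mul_correction_ratio (hπhat x).ne' (hπhat y).ne']

theorem stmt_18 {d : ℕ} (π πhat : EuclideanSpace ℝ (Fin d) → ℝ)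
    (hπ : ∀ x, 0 < π x) (hπhat : ∀ x, 0 < πhat x)
    (q : EuclideanSpace ℝ (Fin d) → EuclideanSpace ℝ (Fin d) → ℝ) (hq : ∀ x y, 0 < q x y)
    (αMH αDA : EuclideanSpace ℝ (Fin d) → EuclideanSpace ℝ (Fin d) → ℝ)
    (hMH : ∀ x y, αMH x y = min 1 (π y * q y x / (π x * q x y)))
    (hDA : ∀ x y, αDA x y = min 1 (πhat y * q y x / (πhat x * q x y)) *
      min 1 ((π y * πhat x) / (π x * πhat y)))
    (πm : Measure (EuclideanSpace ℝ (Fin d)))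
    (hπm : πm = volume.withDensity (fun x => ENNReal.ofReal (π x)))
    (f : EuclideanSpace ℝ (Fin d) → ℝ) (hf : MemLp f 2 πm) :
    dirichletForm π q αDA f ≤ dirichletForm π q αMH f :=
  stmt_18_general π πhat hπ hπhat q hq αMH αDA hMH hDA f
end
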